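/- arXiv:1312.2444 — 7 statements merged into one kernel-verified Lean document; each statement's English description precedes it below -/
import Mathlib

section
/- For the Fleming-Viot generator L on the complete graph with K sites and killing rate p, applied to ψ_{k,l}(η) = η(k)η(l) with k ≠ l: Lψ_{k,l}(η) = −(2K(N−1+p))/(K(N−1)) · η(k)η(l) + ((N−1)/K)(η(k)+η(l)). -/
/-- `move η i j` is the configuration `T_{i→j} η`. -/
def move {F : Type*} [DecidableEq F] (η : F → ℕ) (i j : F) : F → ℕ :=
  fun k => if i = j then η k else if k = i then η i - 1 else if k = j then η j + 1 else η k

/-- Fleming-Viot generator on the complete graph with `K` sites, `N` particles and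
killing rate `p`. -/
noncomputable def cgGen (K N : ℕ) (p : ℝ) (f : (Fin K → ℕ) → ℝ) (η : Fin K → ℕ) : ℝ :=
  ∑ i, (η i : ℝ) * ∑ j, (f (move η i j) - f η) *
      (1 / (K : ℝ) + p * (η j : ℝ) / ((N : ℝ) - 1))

/-! Write `w j = 1/K + p η(j)/(N-1)` for the rate of jumping to `j`. For `k ≠ l`, a jump
`i → j` changes `η(k)η(l)` by `d_k η(l) + d_l η(k) + d_k d_l` with `d_m = [m = j] - [m = i]`,
and `d_k d_l = -[k = j][l = i] - [k = i][l = j]`. Summing against `η(i) w(j)` gives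
`(N - 1)(η(l) w(k) + η(k) w(l)) - 2 (∑ w) η(k)η(l)`, and `∑ w = 1 + pN/(N-1)`. -/

section JumpGenerator

variable {F : Type*} [DecidableEq F]

theorem cast_move_apply {η : F → ℕ} {i : F} (hi : 0 < η i) (j m : F) :
    (move η i j m : ℝ) = η m + (if m = j then 1 else 0) - (if m = i then 1 else 0) := by
  unfold move
  split_ifs <;> subst_vars <;> simp_all [Nat.cast_sub hi]

variable [Fintype F]

noncomputable def jumpGen (w : F → ℝ) (f : (F → ℕ) → ℝ) (η : F → ℕ) : ℝ :=
  ∑ i, (η i : ℝ) * ∑ j, (f (move η i j) - f η) * w j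

theorem jumpGen_coord_mul_coord (w : F → ℝ) (η : F → ℕ) {k l : F} (hkl : k ≠ l) :
    jumpGen w (fun ξ => (ξ k : ℝ) * ξ l) η =
      ((∑ i, η i : ℝ) - 1) * (η l * w k + η k * w l) - 2 * (∑ j, w j) * (η k * η l) := by
  -- when `η i = 0` the move is truncated, but its term carries the factor `η i` anyway
  have hterm : ∀ i j, (η i : ℝ) * (((move η i j k : ℝ) * move η i j l - η k * η l) * w j) =
      (η i : ℝ) * w j * (((if k = j then 1 else 0) - (if k = i then 1 else 0)) * η l +
        ((if l = j then 1 else 0) - (if l = i then 1 else 0)) * η k +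
        ((if k = j then 1 else 0) - (if k = i then 1 else 0)) *
          ((if l = j then 1 else 0) - (if l = i then 1 else 0))) := by
    intro i j
    rcases (η i).eq_zero_or_pos with h | h
    · simp [h]
    · rw [cast_move_apply h, cast_move_apply h]
      ring
  simp only [jumpGen, Finset.mul_sum, hterm]
  simp only [sub_mul, ite_mul, one_mul, zero_mul, mul_sub, mul_ite, mul_one, mul_zero, mul_add,
    Finset.sum_add_distrib, Finset.sum_sub_distrib, Finset.sum_ite_eq, Finset.mem_univ, ↓reduceIte,
    Finset.sum_ite_irrel, Finset.sum_const_zero, hkl, zero_sub, Finset.sum_neg_distrib, sub_zero]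
  simp only [← Finset.sum_mul, ← Finset.mul_sum]
  ring

end JumpGenerator

theorem cgGen_eq_jumpGen (K N : ℕ) (p : ℝ) (f : (Fin K → ℕ) → ℝ) (η : Fin K → ℕ) :
    cgGen K N p f η = jumpGen (fun j => 1 / (K : ℝ) + p * (η j : ℝ) / ((N : ℝ) - 1)) f η :=
  rfl

theorem stmt_7_general (K N : ℕ) (hN : 2 ≤ N) (p : ℝ)
    (k l : Fin K) (hkl : k ≠ l) (η : Fin K → ℕ) (hη : ∑ i, η i = N) :
    cgGen K N p (fun ξ => (ξ k : ℝ) * (ξ l : ℝ)) η =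
      -(2 * K * ((N : ℝ) - 1 + p)) / (K * ((N : ℝ) - 1)) * ((η k : ℝ) * (η l : ℝ)) +
        ((N : ℝ) - 1) / K * ((η k : ℝ) + (η l : ℝ)) := by
  have hK0 : (K : ℝ) ≠ 0 := Nat.cast_ne_zero.2 k.pos.ne'
  have hN1 : (N : ℝ) - 1 ≠ 0 := by
    have : (2 : ℝ) ≤ N := by exact_mod_cast hN
    linarith
  have hsum : ∑ i, (η i : ℝ) = N := by exact_mod_cast hη
  have hrates :
      ∑ j, (1 / (K : ℝ) + p * (η j : ℝ) / ((N : ℝ) - 1)) = 1 + p * N / ((N : ℝ) - 1) := by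
    rw [Finset.sum_add_distrib, ← Finset.sum_div (f := fun j => p * (η j : ℝ)), ← Finset.mul_sum,
      hsum]
    simp [hK0]
  rw [cgGen_eq_jumpGen, jumpGen_coord_mul_coord _ _ hkl, hrates, hsum]
  field_simp
  ring

/-- Action of the complete graph Fleming-Viot generator on `ψ_{k,l}(η) = η(k)η(l)`. -/
theorem stmt_7 (K N : ℕ) (hK : 1 ≤ K) (hN : 2 ≤ N) (p : ℝ) (hp : 0 < p)
    (k l : Fin K) (hkl : k ≠ l) (η : Fin K → ℕ) (hη : ∑ i, η i = N) :
    cgGen K N p (fun ξ => (ξ k : ℝ) * (ξ l : ℝ)) η =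
      -(2 * K * ((N : ℝ) - 1 + p)) / (K * ((N : ℝ) - 1)) * ((η k : ℝ) * (η l : ℝ)) +
        ((N : ℝ) - 1) / K * ((η k : ℝ) + (η l : ℝ)) :=
  stmt_7_general K N hN p k l hkl η hη
end

section
/- The measure ν_N on E defined by ν_N({η}) = Z^{−1}∏_{i=1}^K ∏_{j=0}^{η(i)−1} (N−1+Kpj)/(j+1) (with Z a normalizing constant) is reversible for the complete graph Fleming-Viot generator: it satisfies the detailed balance equations ν_N({η})C(η, T_{i→j}η) = ν_N({T_{i→j}η})C(T_{i→j}η, η) for all η ∈ E with η(i) ≥ 1 and all i ≠ j, where C(η, T_{i→j}η) = η(i)(1/K + p·η(j)/(N−1)). -/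
/-- The unnormalized reversible weight `∏_{i=1}^K ∏_{j=0}^{η(i)-1} (N-1+Kpj)/(j+1)`. -/
noncomputable def cgWeight (K N : ℕ) (p : ℝ) (η : Fin K → ℕ) : ℝ :=
  ∏ i, ∏ j ∈ Finset.range (η i), (((N : ℝ) - 1 + K * p * j) / (j + 1))

open Finset

section Move

variable {F : Type*} [DecidableEq F] (η : F → ℕ) {i j : F}

theorem move_apply_left (hij : i ≠ j) : move η i j i = η i - 1 := by
  simp [move, hij]

theorem move_apply_right (hij : i ≠ j) : move η i j j = η j + 1 := by
  simp [move, hij, hij.symm]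

theorem move_apply_of_ne {k : F} (hki : k ≠ i) (hkj : k ≠ j) : move η i j k = η k := by
  simp [move, hki, hkj]

end Move

theorem prod_univ_eq_mul_prod_sdiff_pair {F M : Type*} [Fintype F] [DecidableEq F]
    [CommMonoid M] (f : F → M) {i j : F} (hij : i ≠ j) :
    ∏ k, f k = f i * f j * ∏ k ∈ univ \ {i, j}, f k := by
  rw [← prod_pair hij, mul_comm, prod_sdiff (subset_univ _)]

noncomputable def cgSiteWeight (K N : ℕ) (p : ℝ) (n : ℕ) : ℝ :=
  ∏ m ∈ range n, (((N : ℝ) - 1 + K * p * m) / (m + 1))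

theorem cgWeight_eq_prod_cgSiteWeight (K N : ℕ) (p : ℝ) (η : Fin K → ℕ) :
    cgWeight K N p η = ∏ k, cgSiteWeight K N p (η k) :=
  rfl

theorem cgSiteWeight_succ (K N : ℕ) (p : ℝ) (n : ℕ) :
    cgSiteWeight K N p (n + 1) =
      cgSiteWeight K N p n * (((N : ℝ) - 1 + K * p * n) / (n + 1)) :=
  prod_range_succ _ _

theorem cgSiteWeight_detailed_balance {K N : ℕ} (hK : (K : ℝ) ≠ 0) (hN : (N : ℝ) - 1 ≠ 0)
    (p : ℝ) (a b : ℕ) :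
    cgSiteWeight K N p (a + 1) * cgSiteWeight K N p b *
        (((a : ℝ) + 1) * (1 / (K : ℝ) + p * b / ((N : ℝ) - 1))) =
      cgSiteWeight K N p a * cgSiteWeight K N p (b + 1) *
        (((b : ℝ) + 1) * (1 / (K : ℝ) + p * a / ((N : ℝ) - 1))) := by
  rw [cgSiteWeight_succ, cgSiteWeight_succ]
  field_simp

theorem stmt_10_general (K N : ℕ) (hN : 2 ≤ N) (p : ℝ)
    (Z : ℝ) (η : Fin K → ℕ)
    (i j : Fin K) (hij : i ≠ j) (hi : 1 ≤ η i) :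
    (Z⁻¹ * cgWeight K N p η) *
        ((η i : ℝ) * (1 / (K : ℝ) + p * (η j : ℝ) / ((N : ℝ) - 1))) =
      (Z⁻¹ * cgWeight K N p (move η i j)) *
        ((move η i j j : ℝ) * (1 / (K : ℝ) + p * (move η i j i : ℝ) / ((N : ℝ) - 1))) := by
  obtain ⟨a, ha⟩ : ∃ a, η i = a + 1 := ⟨η i - 1, by omega⟩
  have hK : (K : ℝ) ≠ 0 := Nat.cast_ne_zero.2 i.pos.ne'
  have hN : (N : ℝ) - 1 ≠ 0 := by
    have : (2 : ℝ) ≤ N := by exact_mod_cast hN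
    linarith
  have hrest : ∏ k ∈ univ \ {i, j}, cgSiteWeight K N p (move η i j k) =
      ∏ k ∈ univ \ {i, j}, cgSiteWeight K N p (η k) := by
    refine prod_congr rfl fun k hk => ?_
    simp only [mem_sdiff, mem_insert, mem_singleton, not_or] at hk
    rw [move_apply_of_ne η hk.2.1 hk.2.2]
  simp only [cgWeight_eq_prod_cgSiteWeight, prod_univ_eq_mul_prod_sdiff_pair _ hij, hrest,
    move_apply_left η hij, move_apply_right η hij, ha, Nat.add_sub_cancel]
  push_cast
  linear_combination (Z⁻¹ * ∏ k ∈ univ \ {i, j}, cgSiteWeight K N p (η k)) *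
    cgSiteWeight_detailed_balance hK hN p a (η j)

/-- The measure `ν_N({η}) = Z⁻¹ ∏_i ∏_{j<η(i)} (N-1+Kpj)/(j+1)` satisfies the detailed
balance equations `ν_N({η}) C(η, T_{i→j}η) = ν_N({T_{i→j}η}) C(T_{i→j}η, η)` for the
complete graph Fleming-Viot jump rates `C(η, T_{i→j}η) = η(i)(1/K + p η(j)/(N-1))`. -/
theorem stmt_10 (K N : ℕ) (hK : 1 ≤ K) (hN : 2 ≤ N) (p : ℝ) (hp : 0 < p)
    (Z : ℝ) (hZ : 0 < Z) (η : Fin K → ℕ) (hη : ∑ i, η i = N)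
    (i j : Fin K) (hij : i ≠ j) (hi : 1 ≤ η i) :
    (Z⁻¹ * cgWeight K N p η) *
        ((η i : ℝ) * (1 / (K : ℝ) + p * (η j : ℝ) / ((N : ℝ) - 1))) =
      (Z⁻¹ * cgWeight K N p (move η i j)) *
        ((move η i j j : ℝ) * (1 / (K : ℝ) + p * (move η i j i : ℝ) / ((N : ℝ) - 1))) :=
  stmt_10_general K N hN p Z η i j hij hi
end

section
/- Under the reversible measure ν_N (p = 1/K case generalized to arbitrary p > 0), the marginal variance is Var_{ν_N}(η(i)) = N(K−1)(Np+N−1)/(K²(N−1+p)), and for i ≠ j, Cov_{ν_N}(η(i), η(j)) = −Var_{ν_N}(η(i))/(K−1) = (−N²(p+1)+N)/(K²(N−1+p)). -/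
/-- Expectation of `f` under the normalized reversible measure `ν_N`. -/
noncomputable def cgExp (K N : ℕ) (p : ℝ) (f : (Fin K → ℕ) → ℝ) : ℝ :=
  (∑ η ∈ Finset.Nat.antidiagonalTuple K N, cgWeight K N p η * f η) /
    (∑ η ∈ Finset.Nat.antidiagonalTuple K N, cgWeight K N p η)

/-!
With `α = (N-1)/(Kp)` the weight of `η` is `(Kp)^N ∏ₗ multichoose(α, η l)`, so `ν_N` is the
Dirichlet-multinomial (Pólya urn) law with all parameters equal to `α`. Chu–Vandermonde for
`multichoose` normalises it: `∑_{|η| = N} ∏ₗ multichoose(x l, η l) = multichoose(∑ x, N)`.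
The identity `(n+1) multichoose(x, n+1) = x multichoose(x+1, n)` turns a factor `η i` into a
shift `x i ↦ x i + 1` of the parameters and `N ↦ N - 1` of the total, which yields the factorial
moments `E η_i = Nα/A`, `E η_i(η_i - 1) = N(N-1)α(α+1)/(A(A+1))` and
`E η_i η_j = N(N-1)α²/(A(A+1))`, where `A = Kα = (N-1)/p`.
-/

open Finset Polynomial Function

-- `multichoose x n = (-1)ⁿ choose (-x) n` reduces this to the library's Chu–Vandermonde.
theorem Ring.multichoose_add {R : Type*} [CommRing R] [BinomialRing R] (x y : R) (n : ℕ) :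
    Ring.multichoose (x + y) n =
      ∑ ab ∈ antidiagonal n, Ring.multichoose x ab.1 * Ring.multichoose y ab.2 := by
  have h := Ring.add_choose_eq n (Commute.all (-x) (-y))
  rw [← neg_add, Ring.choose_neg'] at h
  simp only [Ring.choose_neg', smul_mul_smul_comm, ← Int.negOnePow_add, ← Nat.cast_add] at h
  rw [sum_congr rfl fun ab hab => by rw [mem_antidiagonal.mp hab], ← smul_sum] at h
  exact MulAction.injective (Int.negOnePow n) h

section Multichoose

variable {R : Type*} [CommRing R] [BinomialRing R]

theorem PowerSeries.mk_multichoose_zero : PowerSeries.mk (Ring.multichoose (0 : R)) = 1 := by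
  ext (_ | n)
  · simp
  · simp [Ring.multichoose_zero_succ]

theorem PowerSeries.mk_multichoose_add (x y : R) :
    PowerSeries.mk (Ring.multichoose (x + y)) =
      PowerSeries.mk (Ring.multichoose x) * PowerSeries.mk (Ring.multichoose y) := by
  ext n
  simp only [coeff_mk, coeff_mul, Ring.multichoose_add]

theorem PowerSeries.mk_multichoose_sum {ι : Type*} (s : Finset ι) (x : ι → R) :
    PowerSeries.mk (Ring.multichoose (∑ l ∈ s, x l)) =
      ∏ l ∈ s, PowerSeries.mk (Ring.multichoose (x l)) := by
  induction s using Finset.cons_induction with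
  | empty => simp [mk_multichoose_zero]
  | cons a s ha ih => rw [sum_cons, prod_cons, mk_multichoose_add, ih]

theorem sum_antidiagonalTuple_prod_multichoose {K : ℕ} (x : Fin K → R) (N : ℕ) :
    ∑ η ∈ Nat.antidiagonalTuple K N, ∏ l, Ring.multichoose (x l) (η l) =
      Ring.multichoose (∑ l, x l) N := by
  have h := congrArg (PowerSeries.coeff N) (PowerSeries.mk_multichoose_sum univ x)
  rw [PowerSeries.coeff_mk, PowerSeries.coeff_prod, finsuppAntidiag, sum_map] at h
  rw [h, ← piAntidiag_univ_fin_eq_antidiagonalTuple, ← sum_attach]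
  simp

end Multichoose

namespace Real

theorem multichoose_eq_ascPochhammer_div (x : ℝ) (n : ℕ) :
    Ring.multichoose x n = (ascPochhammer ℝ n).eval x / n.factorial := by
  rw [eq_div_iff (by positivity), mul_comm, ← nsmul_eq_mul,
    Ring.factorial_nsmul_multichoose_eq_ascPochhammer, ascPochhammer_smeval_eq_eval]

theorem multichoose_pos {x : ℝ} (hx : 0 < x) (n : ℕ) : 0 < Ring.multichoose x n := by
  rw [multichoose_eq_ascPochhammer_div]
  exact div_pos (ascPochhammer_pos n x hx) (by positivity)

theorem succ_mul_multichoose_succ (x : ℝ) (n : ℕ) :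
    (n + 1) * Ring.multichoose x (n + 1) = x * Ring.multichoose (x + 1) n := by
  simp only [multichoose_eq_ascPochhammer_div, ascPochhammer_succ_left, eval_mul, eval_X,
    eval_comp, eval_add, eval_one, Nat.factorial_succ, Nat.cast_mul, Nat.cast_succ]
  field_simp

theorem multichoose_add_one_eq {x : ℝ} (hx : x ≠ 0) (n : ℕ) :
    Ring.multichoose (x + 1) n = (n + 1) * Ring.multichoose x (n + 1) / x := by
  rw [succ_mul_multichoose_succ, mul_div_cancel_left₀ _ hx]

theorem multichoose_add_two_eq {x : ℝ} (hx : 0 < x) (n : ℕ) :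
    Ring.multichoose (x + 2) n =
      (n + 2) * (n + 1) * Ring.multichoose x (n + 2) / (x * (x + 1)) := by
  rw [← one_add_one_eq_two, ← add_assoc, multichoose_add_one_eq (by positivity),
    multichoose_add_one_eq hx.ne']
  push_cast
  field_simp
  ring

theorem multichoose_eq_prod_range (x : ℝ) (n : ℕ) :
    Ring.multichoose x n = ∏ j ∈ range n, (x + j) / (j + 1) := by
  induction n with
  | zero => simp
  | succ n ih =>
    rw [prod_range_succ, ← ih, multichoose_eq_ascPochhammer_div, multichoose_eq_ascPochhammer_div,
      ascPochhammer_succ_eval, Nat.factorial_succ, Nat.cast_mul, Nat.cast_succ]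
    field_simp

theorem prod_range_add_mul_div_succ {c d α : ℝ} (h : d * α = c) (n : ℕ) :
    ∏ j ∈ range n, (c + d * j) / (j + 1) = d ^ n * Ring.multichoose α n := by
  rw [multichoose_eq_prod_range, ← card_range n, ← prod_const, card_range,
    ← prod_mul_distrib, ← h]
  refine prod_congr rfl fun j _ => ?_
  rw [mul_div_assoc', mul_add]

end Real

theorem Finset.sum_update_add {ι M : Type*} [Fintype ι] [DecidableEq ι] [AddCommMonoid M]
    (f : ι → M) (i : ι) (a : M) : ∑ l, update f i (f i + a) l = ∑ l, f l + a := by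
  rw [sum_update_of_mem (mem_univ i), sdiff_singleton_eq_erase, ← add_sum_erase _ _ (mem_univ i)]
  abel

theorem Finset.Nat.sum_antidiagonalTuple_succ_eq_sum_update {M : Type*} [AddCommMonoid M]
    {K : ℕ} (N : ℕ) (i : Fin K) (F : (Fin K → ℕ) → M) (hF : ∀ η, η i = 0 → F η = 0) :
    ∑ η ∈ antidiagonalTuple K (N + 1), F η =
      ∑ τ ∈ antidiagonalTuple K N, F (update τ i (τ i + 1)) := by
  have hinj : Injective fun τ : Fin K → ℕ => update τ i (τ i + 1) := by
    intro τ σ h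
    ext l
    rcases eq_or_ne l i with rfl | hl
    · simpa using congrFun h l
    · simpa [hl] using congrFun h l
  rw [← sum_image hinj.injOn]
  refine (sum_subset (fun η hη => ?_) fun η hη hη' => hF η ?_).symm
  · obtain ⟨τ, hτ, rfl⟩ := mem_image.mp hη
    rw [mem_antidiagonalTuple] at hτ ⊢
    rw [sum_update_add, hτ]
  · by_contra h
    have hη_pred : update (update η i (η i - 1)) i (η i - 1 + 1) = η := by
      rw [update_idem, Nat.sub_add_cancel (Nat.one_le_iff_ne_zero.mpr h), update_eq_self]
    refine hη' (mem_image.mpr ⟨update η i (η i - 1), ?_, by simpa using hη_pred⟩)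
    rw [mem_antidiagonalTuple] at hη ⊢
    have := sum_update_add (update η i (η i - 1)) i 1
    rw [update_self, hη_pred] at this
    omega

noncomputable def polyaWeight {K : ℕ} (x : Fin K → ℝ) (η : Fin K → ℕ) : ℝ :=
  ∏ l, Ring.multichoose (x l) (η l)

section Polya

variable {K : ℕ}

theorem sum_polyaWeight (x : Fin K → ℝ) (N : ℕ) :
    ∑ η ∈ Nat.antidiagonalTuple K N, polyaWeight x η = Ring.multichoose (∑ l, x l) N :=
  sum_antidiagonalTuple_prod_multichoose x N

theorem polyaWeight_update (x : Fin K → ℝ) (τ : Fin K → ℕ) (i : Fin K) (a : ℝ) (b : ℕ) :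
    polyaWeight (update x i a) (update τ i b) =
      Ring.multichoose a b * ∏ l ∈ univ.erase i, Ring.multichoose (x l) (τ l) := by
  simp only [polyaWeight, apply_update₂ (fun _ => Ring.multichoose)]
  rw [prod_update_of_mem (mem_univ i), sdiff_singleton_eq_erase]

theorem coord_succ_mul_polyaWeight_update (x : Fin K → ℝ) (τ : Fin K → ℕ) (i : Fin K) :
    ((τ i : ℝ) + 1) * polyaWeight x (update τ i (τ i + 1)) =
      x i * polyaWeight (update x i (x i + 1)) τ := by
  conv_lhs => rw [← update_eq_self i x]
  conv_rhs => rw [← update_eq_self i τ]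
  rw [polyaWeight_update, polyaWeight_update, ← mul_assoc, ← mul_assoc,
    Real.succ_mul_multichoose_succ]

theorem sum_coord_mul_mul_polyaWeight (x : Fin K → ℝ) (i : Fin K) (N : ℕ)
    (G : (Fin K → ℕ) → ℝ) :
    ∑ η ∈ Nat.antidiagonalTuple K (N + 1), (η i : ℝ) * G η * polyaWeight x η =
      x i * ∑ τ ∈ Nat.antidiagonalTuple K N,
        G (update τ i (τ i + 1)) * polyaWeight (update x i (x i + 1)) τ := by
  rw [Nat.sum_antidiagonalTuple_succ_eq_sum_update N i _ fun η h => by simp [h], mul_sum]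
  refine sum_congr rfl fun τ _ => ?_
  rw [update_self, Nat.cast_succ]
  linear_combination G (update τ i (τ i + 1)) * coord_succ_mul_polyaWeight_update x τ i

theorem sum_coord_mul_polyaWeight (x : Fin K → ℝ) (i : Fin K) (N : ℕ) :
    ∑ η ∈ Nat.antidiagonalTuple K (N + 1), (η i : ℝ) * polyaWeight x η =
      x i * Ring.multichoose (∑ l, x l + 1) N := by
  simpa [sum_polyaWeight, sum_update_add] using sum_coord_mul_mul_polyaWeight x i N fun _ => 1

theorem sum_coord_mul_coord_sub_one_mul_polyaWeight (x : Fin K → ℝ) (i : Fin K) (N : ℕ) :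
    ∑ η ∈ Nat.antidiagonalTuple K (N + 2), (η i : ℝ) * ((η i : ℝ) - 1) * polyaWeight x η =
      x i * (x i + 1) * Ring.multichoose (∑ l, x l + 2) N := by
  rw [sum_coord_mul_mul_polyaWeight]
  simp only [update_self, Nat.cast_succ, add_sub_cancel_right]
  rw [sum_coord_mul_polyaWeight, sum_update_add]
  simp only [update_self]
  ring_nf

theorem sum_coord_mul_coord_mul_polyaWeight (x : Fin K → ℝ) {i j : Fin K} (hij : i ≠ j)
    (N : ℕ) :
    ∑ η ∈ Nat.antidiagonalTuple K (N + 2), (η i : ℝ) * (η j : ℝ) * polyaWeight x η =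
      x i * x j * Ring.multichoose (∑ l, x l + 2) N := by
  rw [sum_coord_mul_mul_polyaWeight]
  simp only [update_of_ne hij.symm]
  rw [sum_coord_mul_polyaWeight, sum_update_add]
  simp only [update_of_ne hij.symm]
  ring_nf

end Polya

theorem cgWeight_eq_polyaWeight {K N : ℕ} {p α : ℝ} (hα : K * p * α = N - 1)
    {η : Fin K → ℕ} (hη : η ∈ Nat.antidiagonalTuple K N) :
    cgWeight K N p η = (K * p) ^ N * polyaWeight (fun _ => α) η := by
  simp only [cgWeight, Real.prod_range_add_mul_div_succ hα, prod_mul_distrib, prod_pow_eq_pow_sum,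
    Nat.mem_antidiagonalTuple.mp hη, polyaWeight]

theorem cgExp_eq_div_multichoose {K N : ℕ} {p α : ℝ} (hKp : K * p ≠ 0)
    (hα : K * p * α = N - 1) (f : (Fin K → ℕ) → ℝ) :
    cgExp K N p f = (∑ η ∈ Nat.antidiagonalTuple K N, polyaWeight (fun _ => α) η * f η) /
      Ring.multichoose (K * α) N := by
  have hW := fun η (hη : η ∈ Nat.antidiagonalTuple K N) => cgWeight_eq_polyaWeight hα hη
  rw [cgExp, sum_congr rfl fun η hη => by rw [hW η hη, mul_assoc], sum_congr rfl hW, ← mul_sum,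
    ← mul_sum, mul_div_mul_left _ _ (pow_ne_zero N hKp), sum_polyaWeight]
  simp

section Moments

variable {K : ℕ} {p : ℝ}

theorem cgExp_add_two_eq_div_multichoose (hK : 0 < K) (hp : 0 < p) (M : ℕ)
    (f : (Fin K → ℕ) → ℝ) :
    cgExp K (M + 2) p f =
      (∑ η ∈ Nat.antidiagonalTuple K (M + 2), polyaWeight (fun _ => (M + 1) / (K * p)) η * f η) /
        Ring.multichoose (K * ((M + 1) / (K * p))) (M + 2) := by
  refine cgExp_eq_div_multichoose (by positivity) ?_ f
  push_cast
  field_simp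
  ring

theorem cgExp_coord (hK : 0 < K) (hp : 0 < p) (M : ℕ) (i : Fin K) :
    cgExp K (M + 2) p (fun η => (η i : ℝ)) = (M + 2) / K := by
  have hA : (K : ℝ) * ((M + 1) / (K * p)) = (M + 1) / p := by field_simp
  have hZ := (Real.multichoose_pos (show 0 < ((M : ℝ) + 1) / p by positivity) (M + 2)).ne'
  rw [cgExp_add_two_eq_div_multichoose hK hp, sum_congr rfl fun η _ => mul_comm _ _,
    sum_coord_mul_polyaWeight]
  simp only [sum_const, card_univ, Fintype.card_fin, nsmul_eq_mul, hA]
  rw [Real.multichoose_add_one_eq (by positivity)]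
  push_cast
  field_simp
  ring

theorem cgExp_coord_sq (hK : 0 < K) (hp : 0 < p) (M : ℕ) (i : Fin K) :
    cgExp K (M + 2) p (fun η => (η i : ℝ) ^ 2) =
      (M + 2) * (M + 1) * (M + 1 + K * p) / (K ^ 2 * (M + 1 + p)) + (M + 2) / K := by
  have hA : (K : ℝ) * ((M + 1) / (K * p)) = (M + 1) / p := by field_simp
  have hZ := (Real.multichoose_pos (show 0 < ((M : ℝ) + 1) / p by positivity) (M + 2)).ne'
  have hsplit (η : Fin K → ℕ) : (η i : ℝ) ^ 2 = (η i : ℝ) * (η i - 1) + η i := by ring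
  rw [cgExp_add_two_eq_div_multichoose hK hp]
  simp only [hsplit, mul_add, sum_add_distrib]
  rw [sum_congr rfl fun η _ => mul_comm _ _, sum_coord_mul_coord_sub_one_mul_polyaWeight,
    sum_congr rfl fun η _ => mul_comm _ _, sum_coord_mul_polyaWeight]
  simp only [sum_const, card_univ, Fintype.card_fin, nsmul_eq_mul, hA]
  rw [Real.multichoose_add_two_eq (by positivity), Real.multichoose_add_one_eq (by positivity)]
  push_cast
  field_simp
  ring

theorem cgExp_coord_mul_coord (hK : 0 < K) (hp : 0 < p) (M : ℕ) {i j : Fin K} (hij : i ≠ j) :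
    cgExp K (M + 2) p (fun η => (η i : ℝ) * η j) =
      (M + 2) * (M + 1) ^ 2 / (K ^ 2 * (M + 1 + p)) := by
  have hA : (K : ℝ) * ((M + 1) / (K * p)) = (M + 1) / p := by field_simp
  have hZ := (Real.multichoose_pos (show 0 < ((M : ℝ) + 1) / p by positivity) (M + 2)).ne'
  rw [cgExp_add_two_eq_div_multichoose hK hp, sum_congr rfl fun η _ => mul_comm _ _,
    sum_coord_mul_coord_mul_polyaWeight _ hij]
  simp only [sum_const, card_univ, Fintype.card_fin, nsmul_eq_mul, hA]
  rw [Real.multichoose_add_two_eq (by positivity)]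
  field_simp

end Moments

/-- Under the reversible measure `ν_N` of the complete graph Fleming-Viot process,
`Var(η(i)) = N(K-1)(Np+N-1)/(K²(N-1+p))` and for `i ≠ j`,
`Cov(η(i),η(j)) = -Var(η(i))/(K-1) = (-N²(p+1)+N)/(K²(N-1+p))`. -/
theorem stmt_13 (K N : ℕ) (hK : 2 ≤ K) (hN : 2 ≤ N) (p : ℝ) (hp : 0 < p)
    (i j : Fin K) (hij : i ≠ j) :
    cgExp K N p (fun η => (η i : ℝ) ^ 2) - (cgExp K N p (fun η => (η i : ℝ))) ^ 2 =
      (N : ℝ) * ((K : ℝ) - 1) * ((N : ℝ) * p + N - 1) /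
        ((K : ℝ) ^ 2 * ((N : ℝ) - 1 + p)) ∧
    cgExp K N p (fun η => (η i : ℝ) * (η j : ℝ)) -
        cgExp K N p (fun η => (η i : ℝ)) * cgExp K N p (fun η => (η j : ℝ)) =
      -(cgExp K N p (fun η => (η i : ℝ) ^ 2) -
          (cgExp K N p (fun η => (η i : ℝ))) ^ 2) / ((K : ℝ) - 1) ∧
    cgExp K N p (fun η => (η i : ℝ) * (η j : ℝ)) -
        cgExp K N p (fun η => (η i : ℝ)) * cgExp K N p (fun η => (η j : ℝ)) =
      (-(N : ℝ) ^ 2 * (p + 1) + N) / ((K : ℝ) ^ 2 * ((N : ℝ) - 1 + p)) := by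
  obtain ⟨M, rfl⟩ : ∃ M, N = M + 2 := ⟨N - 2, by omega⟩
  have hK0 : 0 < K := by omega
  have hK1 : (K : ℝ) - 1 ≠ 0 := sub_ne_zero.mpr (by exact_mod_cast (by omega : K ≠ 1))
  rw [cgExp_coord_sq hK0 hp, cgExp_coord_mul_coord hK0 hp M hij, cgExp_coord hK0 hp,
    cgExp_coord hK0 hp]
  push_cast
  rw [show (M : ℝ) + 2 - 1 + p = M + 1 + p by ring]
  refine ⟨?_, ?_, ?_⟩ <;> field_simp <;> ring
end

section
/- If η is distributed according to the invariant measure ν_N of the complete graph Fleming-Viot process, then E_{ν_N}[d_TV(m(η), π_K)] ≤ √(K(p+1)/N), where π_K is the uniform distribution on {1,…,K}. -/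
/-!
Write `c = N - 1`, `b = K p`. The weight of `ν_N` is a product `∏ᵢ a(ηᵢ)` with
`a(n + 1) (n + 1) = a(n) (c + b n)`, so removing one particle from site `k` turns `η_k w(η)` into
`(c + b ζ_k) w(ζ)` on configurations `ζ` of `N - 1` particles. Doing this at `k` and at `l ≠ k`
gives `c E[η_k²] = (c + b) E[η_k η_l] + c E[η_l]`; summing over `l` and using `E[η_k] = N / K`
(exchangeability) yields `Var(η_k / N) = (K - 1)(N p + N - 1) / (K² N (N - 1 + p))`, which is at
most `(K - 1)(p + 1) / (K² N)`. Cauchy–Schwarz at each site and summing over the `K` sites gives the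
bound on the expected total variation distance.
-/

open Finset

lemma Finset.sum_mul_abs_div_le_sqrt {ι : Type*} (s : Finset ι) (w f : ι → ℝ)
    (hw : ∀ i ∈ s, 0 ≤ w i) :
    (∑ i ∈ s, w i * |f i|) / ∑ i ∈ s, w i ≤ √((∑ i ∈ s, w i * f i ^ 2) / ∑ i ∈ s, w i) := by
  rcases (sum_nonneg hw).eq_or_lt with hZ | hZ
  · rw [← hZ, div_zero]
    exact Real.sqrt_nonneg _
  have hCS : (∑ i ∈ s, w i * |f i|) ^ 2 ≤ (∑ i ∈ s, w i) * ∑ i ∈ s, w i * f i ^ 2 :=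
    sum_sq_le_sum_mul_sum_of_sq_le_mul s hw (fun i hi => mul_nonneg (hw i hi) (sq_nonneg _))
      fun i _ => by rw [mul_pow, sq_abs]; exact le_of_eq (by ring)
  apply Real.le_sqrt_of_sq_le
  rw [div_pow, div_le_div_iff₀ (by positivity) hZ]
  nlinarith

namespace Finset.Nat

variable {K n : ℕ}

lemma sum_antidiagonalTuple_comp_perm {M : Type*} [AddCommMonoid M] (f : (Fin K → ℕ) → M)
    (σ : Equiv.Perm (Fin K)) :
    ∑ η ∈ antidiagonalTuple K n, f (η ∘ σ) = ∑ η ∈ antidiagonalTuple K n, f η :=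
  sum_equiv (σ.symm.arrowCongr (Equiv.refl ℕ))
    (fun η => by simp [mem_antidiagonalTuple, Equiv.sum_comp, Function.comp_def])
    (fun η _ => by congr 1)

lemma add_single_mem_antidiagonalTuple {ζ : Fin K → ℕ} (k : Fin K) :
    ζ + Pi.single k 1 ∈ antidiagonalTuple K (n + 1) ↔ ζ ∈ antidiagonalTuple K n := by
  simp [mem_antidiagonalTuple, sum_add_distrib]

lemma sum_antidiagonalTuple_succ_mul_apply {R : Type*} [Semiring R] (f : (Fin K → ℕ) → R)
    (k : Fin K) :
    ∑ η ∈ antidiagonalTuple K (n + 1), f η * η k =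
      ∑ ζ ∈ antidiagonalTuple K n, f (ζ + Pi.single k 1) * (ζ k + 1) := by
  have hinj : Set.InjOn (· + Pi.single k 1) (antidiagonalTuple K n : Set (Fin K → ℕ)) :=
    (add_left_injective _).injOn
  rw [← sum_subset (s₁ := (antidiagonalTuple K n).image (· + Pi.single k 1)), sum_image hinj]
  · simp
  · intro η hη
    obtain ⟨ζ, hζ, rfl⟩ := mem_image.mp hη
    exact (add_single_mem_antidiagonalTuple k).mpr hζ
  · intro η hη hηim
    by_contra hk
    have hcancel : η - Pi.single k 1 + Pi.single k 1 = η := by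
      ext i
      rcases eq_or_ne i k with rfl | hi
      · have : η i ≠ 0 := by rintro h; simp [h] at hk
        simp only [Pi.add_apply, Pi.sub_apply, Pi.single_eq_same]
        omega
      · simp [hi]
    refine hηim (mem_image.mpr ⟨η - Pi.single k 1, ?_, hcancel⟩)
    rwa [← add_single_mem_antidiagonalTuple k, hcancel]

end Finset.Nat

section Weights

variable {ι : Type*} [Fintype ι] (c b : ℝ)

noncomputable def siteWeight (n : ℕ) : ℝ := ∏ j ∈ range n, (c + b * j) / (j + 1)

noncomputable def prodWeight (η : ι → ℕ) : ℝ := ∏ i, siteWeight c b (η i)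

lemma siteWeight_succ_mul (n : ℕ) :
    siteWeight c b (n + 1) * (n + 1) = siteWeight c b n * (c + b * n) := by
  rw [siteWeight, siteWeight, prod_range_succ]
  field_simp

lemma siteWeight_nonneg {c b : ℝ} (hc : 0 ≤ c) (hb : 0 ≤ b) (n : ℕ) : 0 ≤ siteWeight c b n :=
  prod_nonneg fun _ _ => by positivity

lemma prodWeight_nonneg {c b : ℝ} (hc : 0 ≤ c) (hb : 0 ≤ b) (η : ι → ℕ) :
    0 ≤ prodWeight c b η :=
  prod_nonneg fun _ _ => siteWeight_nonneg hc hb _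

lemma prodWeight_comp_perm (η : ι → ℕ) (σ : Equiv.Perm ι) :
    prodWeight c b (η ∘ σ) = prodWeight c b η :=
  Equiv.prod_comp σ fun i => siteWeight c b (η i)

lemma prodWeight_add_single_mul [DecidableEq ι] (ζ : ι → ℕ) (k : ι) :
    prodWeight c b (ζ + Pi.single k 1) * (ζ k + 1) = prodWeight c b ζ * (c + b * ζ k) := by
  have hrest : ∏ i ∈ univ.erase k, siteWeight c b ((ζ + Pi.single k 1 : ι → ℕ) i) =
      ∏ i ∈ univ.erase k, siteWeight c b (ζ i) :=
    prod_congr rfl fun i hi => by simp [ne_of_mem_erase hi]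
  rw [prodWeight, prodWeight, ← mul_prod_erase univ _ (mem_univ k),
    ← mul_prod_erase univ _ (mem_univ k), hrest]
  simp only [Pi.add_apply, Pi.single_eq_same]
  linear_combination (∏ i ∈ univ.erase k, siteWeight c b (ζ i)) * siteWeight_succ_mul c b (ζ k)

lemma cgWeight_eq_prodWeight (K N : ℕ) (p : ℝ) :
    cgWeight K N p = prodWeight ((N : ℝ) - 1) (K * p) :=
  rfl

end Weights

section Moments

open Finset.Nat

variable {K : ℕ} (c b : ℝ)

lemma sum_prodWeight_size_bias {n : ℕ} (k : Fin K) (G : (Fin K → ℕ) → ℝ) :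
    ∑ η ∈ antidiagonalTuple K (n + 1), prodWeight c b η * (η k * G η) =
      ∑ ζ ∈ antidiagonalTuple K n, prodWeight c b ζ * ((c + b * ζ k) * G (ζ + Pi.single k 1)) :=
  calc _ = ∑ η ∈ antidiagonalTuple K (n + 1), prodWeight c b η * G η * η k :=
        sum_congr rfl fun _ _ => by ring
    _ = ∑ ζ ∈ antidiagonalTuple K n,
          prodWeight c b (ζ + Pi.single k 1) * G (ζ + Pi.single k 1) * (ζ k + 1) :=
        sum_antidiagonalTuple_succ_mul_apply _ k
    _ = _ := sum_congr rfl fun ζ _ => by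
        linear_combination G (ζ + Pi.single k 1) * prodWeight_add_single_mul c b ζ k

/-- Size-biasing at `k` and at `l` turns both `η_k² (c + b η_l)` and `η_l (c + b η_k) (η_k + 1)`
into `(c + b ζ_k) (c + b ζ_l) (ζ_k + 1)`. -/
lemma sum_prodWeight_mul_detailed_balance_eq_zero {N : ℕ} {k l : Fin K} (hkl : k ≠ l) :
    ∑ η ∈ antidiagonalTuple K N,
      prodWeight c b η * (c * η k ^ 2 - (c + b) * η k * η l - c * η l) = 0 := by
  rcases N with _ | n
  · simp [antidiagonalTuple_zero_right]
  have hk := sum_prodWeight_size_bias c b (n := n) k fun η => η k * (c + b * η l)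
  have hl := sum_prodWeight_size_bias c b (n := n) l fun η => (c + b * η k) * (η k + 1)
  calc _ = ∑ η ∈ antidiagonalTuple K (n + 1), prodWeight c b η * (η k * (η k * (c + b * η l))) -
        ∑ η ∈ antidiagonalTuple K (n + 1),
          prodWeight c b η * (η l * ((c + b * η k) * (η k + 1))) := by
        rw [← sum_sub_distrib]
        exact sum_congr rfl fun _ _ => by ring
    _ = 0 := by
        rw [hk, hl, sub_eq_zero]
        refine sum_congr rfl fun ζ _ => ?_
        simp only [Pi.add_apply, Pi.single_eq_same, Pi.single_eq_of_ne hkl,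
          Pi.single_eq_of_ne hkl.symm, add_zero, Nat.cast_add, Nat.cast_one]
        ring

lemma sum_prodWeight_mul_second_moment_eq_zero {N : ℕ} (k : Fin K) :
    ∑ η ∈ antidiagonalTuple K N,
      prodWeight c b η * ((K * c + b) * η k ^ 2 - ((c + b) * N - c) * η k - c * N) = 0 := by
  have hrow : ∀ η ∈ antidiagonalTuple K N,
      ∑ l ∈ univ.erase k, prodWeight c b η * (c * η k ^ 2 - (c + b) * η k * η l - c * η l) =
        prodWeight c b η * ((K * c + b) * η k ^ 2 - ((c + b) * N - c) * η k - c * N) := by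
    intro η hη
    have hsum : ∑ l, (η l : ℝ) = N := by exact_mod_cast mem_antidiagonalTuple.mp hη
    rw [← mul_sum, sum_erase_eq_sub (mem_univ k)]
    simp only [sum_sub_distrib, sum_const, card_fin, nsmul_eq_mul, ← mul_sum, hsum]
    ring
  rw [← sum_congr rfl hrow, sum_comm]
  exact sum_eq_zero fun l hl =>
    sum_prodWeight_mul_detailed_balance_eq_zero c b (ne_of_mem_erase hl).symm

lemma sum_prodWeight_mul_centered_eq_zero {N : ℕ} (k : Fin K) :
    ∑ η ∈ antidiagonalTuple K N, prodWeight c b η * (K * η k - N) = 0 := by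
  have hsymm : ∀ l, ∑ η ∈ antidiagonalTuple K N, prodWeight c b η * η l =
      ∑ η ∈ antidiagonalTuple K N, prodWeight c b η * η k := fun l => by
    simpa [prodWeight_comp_perm] using
      sum_antidiagonalTuple_comp_perm (fun η => prodWeight c b η * η k) (Equiv.swap l k)
  have htotal : ∑ l, ∑ η ∈ antidiagonalTuple K N, prodWeight c b η * η l =
      N * ∑ η ∈ antidiagonalTuple K N, prodWeight c b η := by
    rw [sum_comm, mul_sum]
    refine sum_congr rfl fun η hη => ?_
    have hsum : ∑ l, (η l : ℝ) = N := by exact_mod_cast mem_antidiagonalTuple.mp hη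
    rw [← mul_sum, hsum, mul_comm]
  simp only [mul_sub, sum_sub_distrib, mul_left_comm _ (K : ℝ), ← mul_sum]
  simp only [hsymm, sum_const, card_fin, nsmul_eq_mul] at htotal
  rw [htotal, ← sum_mul, mul_comm, sub_self]

lemma mul_sum_prodWeight_mul_sq_centered {N : ℕ} (k : Fin K) :
    (K * c + b) * ∑ η ∈ antidiagonalTuple K N, prodWeight c b η * (K * η k - N) ^ 2 =
      N * (K - 1) * (N * b + K * c) * ∑ η ∈ antidiagonalTuple K N, prodWeight c b η := by
  calc _ = ∑ η ∈ antidiagonalTuple K N,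
        (K ^ 2 * (prodWeight c b η * ((K * c + b) * η k ^ 2 - ((c + b) * N - c) * η k - c * N)) +
          (N * (K * b - K * c - 2 * b) - K * c) * (prodWeight c b η * (K * η k - N)) +
          N * (K - 1) * (N * b + K * c) * prodWeight c b η) := by
        rw [mul_sum]
        exact sum_congr rfl fun _ _ => by ring
    _ = _ := by
        rw [sum_add_distrib, sum_add_distrib, ← mul_sum, ← mul_sum, ← mul_sum,
          sum_prodWeight_mul_second_moment_eq_zero, sum_prodWeight_mul_centered_eq_zero]
        ring

end Moments

section FlemingViot

variable {K N : ℕ} {p : ℝ}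

lemma cgExp_const_mul (a : ℝ) (f : (Fin K → ℕ) → ℝ) :
    cgExp K N p (fun η => a * f η) = a * cgExp K N p f := by
  simp only [cgExp, mul_left_comm _ a, ← mul_sum, mul_div_assoc]

lemma cgExp_sum {ι : Type*} (s : Finset ι) (f : ι → (Fin K → ℕ) → ℝ) :
    cgExp K N p (fun η => ∑ i ∈ s, f i η) = ∑ i ∈ s, cgExp K N p (f i) := by
  simp only [cgExp, mul_sum]
  rw [sum_comm, sum_div]

lemma cgWeight_nonneg (hN : 1 ≤ N) (hp : 0 ≤ p) (η : Fin K → ℕ) : 0 ≤ cgWeight K N p η :=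
  prodWeight_nonneg (sub_nonneg.mpr (Nat.one_le_cast.mpr hN)) (by positivity) η

lemma cgExp_abs_le_sqrt (hN : 1 ≤ N) (hp : 0 ≤ p) (f : (Fin K → ℕ) → ℝ) :
    cgExp K N p (fun η => |f η|) ≤ √(cgExp K N p (fun η => f η ^ 2)) :=
  sum_mul_abs_div_le_sqrt _ _ f fun η _ => cgWeight_nonneg hN hp η

lemma cgExp_variance_le (hK : 1 ≤ K) (hN : 1 ≤ N) (hp : 0 < p) (k : Fin K) :
    cgExp K N p (fun η => ((η k : ℝ) / N - 1 / K) ^ 2) ≤ (K - 1) * (p + 1) / (K ^ 2 * N) := by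
  have hK' : (1 : ℝ) ≤ K := by exact_mod_cast hK
  have hN' : (1 : ℝ) ≤ N := by exact_mod_cast hN
  have hcb : 0 < K * ((N : ℝ) - 1) + K * p := by nlinarith
  have hscale : (fun η : Fin K → ℕ => ((η k : ℝ) / N - 1 / K) ^ 2) =
      fun η => ((N : ℝ) * K)⁻¹ ^ 2 * (K * η k - N) ^ 2 := by
    funext η
    field_simp
  have hS : ∑ η ∈ Nat.antidiagonalTuple K N, cgWeight K N p η * (K * η k - N) ^ 2 =
      N * (K - 1) * (N * (K * p) + K * (N - 1)) / (K * (N - 1) + K * p) *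
        ∑ η ∈ Nat.antidiagonalTuple K N, cgWeight K N p η := by
    rw [div_mul_eq_mul_div, eq_div_iff hcb.ne', mul_comm]
    exact mul_sum_prodWeight_mul_sq_centered ((N : ℝ) - 1) (K * p) k
  rw [hscale, cgExp_const_mul, cgExp, hS, mul_div_assoc]
  calc _ ≤ ((N : ℝ) * K)⁻¹ ^ 2 *
        (N * (K - 1) * (N * (K * p) + K * (N - 1)) / (K * (N - 1) + K * p)) := by
        gcongr
        exact mul_le_of_le_one_right (by positivity) (div_self_le_one _)
    _ ≤ _ := by
        have hslack : 0 ≤ ((K : ℝ) - 1) * (N ^ 2 * K ^ 3 * p ^ 2) :=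
          mul_nonneg (by linarith) (by positivity)
        rw [inv_pow, ← div_eq_inv_mul, div_div, div_le_div_iff₀ (by positivity) (by positivity)]
        nlinarith

end FlemingViot

/-- Under the invariant measure `ν_N` of the complete graph Fleming-Viot process,
`E_{ν_N}[d_TV(m(η), π_K)] ≤ √(K(p+1)/N)`, where `π_K` is uniform on the `K` sites. -/
theorem stmt_14 (K N : ℕ) (hK : 1 ≤ K) (hN : 2 ≤ N) (p : ℝ) (hp : 0 < p) :
    cgExp K N p (fun η => (1 / 2) * ∑ k, |(η k : ℝ) / N - 1 / (K : ℝ)|) ≤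
      Real.sqrt ((K : ℝ) * (p + 1) / N) := by
  calc _ = 1 / 2 * ∑ k, cgExp K N p (fun η => |(η k : ℝ) / N - 1 / K|) := by
        rw [cgExp_const_mul, cgExp_sum]
    _ ≤ 1 / 2 * ∑ _k : Fin K, √((K - 1) * (p + 1) / (K ^ 2 * N)) := by
        gcongr with k
        exact (cgExp_abs_le_sqrt (by omega) hp.le _).trans
          (Real.sqrt_le_sqrt (cgExp_variance_le hK (by omega) hp k))
    _ = K / 2 * √((K - 1) * (p + 1) / (K ^ 2 * N)) := by
        rw [sum_const, Finset.card_fin, nsmul_eq_mul]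
        ring
    _ ≤ √(K * (p + 1) / N) := by
        have hK' : (1 : ℝ) ≤ K := by exact_mod_cast hK
        have hN' : (2 : ℝ) ≤ N := by exact_mod_cast hN
        rw [Real.le_sqrt (by positivity) (by positivity), mul_pow, Real.sq_sqrt (by positivity),
          div_pow, div_mul_div_comm, div_le_div_iff₀ (by positivity) (by positivity)]
        nlinarith [(by positivity : 0 ≤ (K : ℝ) ^ 2 * N * (p + 1) * (3 * K + 1))]
end

section
/- For the two-point Fleming-Viot process, the first coordinate (η_t(1)) is a birth-death process on {0,…,N} with birth rates b_n = (N−n)(b + p₀(2)·n/(N−1)) and death rates d_n = n(a + p₀(1)·(N−n)/(N−1)), and its reversible invariant distribution is π(n) = u₀ · binom(N,n) · ∏_{k=1}^n (b(N−1)+(k−1)p₀(2))/(a(N−1)+(N−k)p₀(1)), i.e., π satisfies the detailed balance π(n)b_n = π(n+1)d_{n+1} for 0 ≤ n ≤ N−1. -/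
/-- Birth rate of the two-point Fleming-Viot marginal: `b_n = (N-n)(b + p₂ n/(N-1))`. -/
noncomputable def bdBirth (N : ℕ) (b p2 : ℝ) (n : ℕ) : ℝ :=
  ((N : ℝ) - n) * (b + p2 * n / ((N : ℝ) - 1))

/-- Death rate of the two-point Fleming-Viot marginal: `d_n = n(a + p₁ (N-n)/(N-1))`. -/
noncomputable def bdDeath (N : ℕ) (a p1 : ℝ) (n : ℕ) : ℝ :=
  (n : ℝ) * (a + p1 * ((N : ℝ) - n) / ((N : ℝ) - 1))

/-- Candidate invariant distribution
`π(n) = u₀ binom(N,n) ∏_{k=1}^n (b(N-1)+(k-1)p₂)/(a(N-1)+(N-k)p₁)`. -/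
noncomputable def bdPi (N : ℕ) (a b p1 p2 u0 : ℝ) (n : ℕ) : ℝ :=
  u0 * (N.choose n : ℝ) *
    ∏ k ∈ Finset.Icc 1 n, (b * ((N : ℝ) - 1) + ((k : ℝ) - 1) * p2) /
      (a * ((N : ℝ) - 1) + ((N : ℝ) - k) * p1)

/-!
Writing `η(1) = N - η(0)` turns the generator of the two-point process into that of the
birth-death chain. For detailed balance, passing from `π(n)` to `π(n+1)` multiplies by
`C(N,n+1)/C(N,n) = (N-n)/(n+1)` and by one new factor of the product; clearing `N-1`, this
ratio is exactly `b_n / d_{n+1}`.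
-/

theorem Nat.cast_choose_succ_mul {K : Type*} [CommRing K] (N n : ℕ) :
    (N.choose (n + 1) : K) * (n + 1) = N.choose n * (N - n) := by
  rcases le_or_gt n N with hn | hn
  · exact_mod_cast congrArg (Nat.cast : ℕ → K) (Nat.choose_succ_right_eq N n) |>.trans
      (by push_cast [hn]; ring)
  · simp [Nat.choose_eq_zero_of_lt hn, Nat.choose_eq_zero_of_lt (hn.trans (Nat.lt_succ_self n))]

theorem bdPi_succ_mul (N n : ℕ) (a b p1 p2 u0 : ℝ) :
    bdPi N a b p1 p2 u0 (n + 1) * (n + 1) = bdPi N a b p1 p2 u0 n * (N - n) *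
      ((b * (N - 1) + n * p2) / (a * (N - 1) + (N - (n + 1)) * p1)) := by
  unfold bdPi
  rw [Finset.prod_Icc_succ_top (by omega)]
  push_cast
  linear_combination (u0 * (∏ k ∈ Finset.Icc 1 n, (b * ((N : ℝ) - 1) + ((k : ℝ) - 1) * p2) /
      (a * ((N : ℝ) - 1) + ((N : ℝ) - k) * p1)) * ((b * (N - 1) + n * p2) /
      (a * (N - 1) + (N - (n + 1)) * p1))) * Nat.cast_choose_succ_mul (K := ℝ) N n

theorem bdBirth_eq_div {N : ℕ} (hN : (N : ℝ) - 1 ≠ 0) (b p2 : ℝ) (n : ℕ) :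
    bdBirth N b p2 n = (N - n) * (b * (N - 1) + n * p2) / (N - 1) := by
  unfold bdBirth
  field_simp

theorem bdDeath_eq_div {N : ℕ} (hN : (N : ℝ) - 1 ≠ 0) (a p1 : ℝ) (n : ℕ) :
    bdDeath N a p1 n = n * (a * (N - 1) + (N - n) * p1) / (N - 1) := by
  unfold bdDeath
  field_simp

theorem bdPi_detailed_balance {N : ℕ} (hN : (N : ℝ) - 1 ≠ 0) (a b p1 p2 u0 : ℝ) {n : ℕ}
    (hD : a * (N - 1) + (N - (n + 1)) * p1 ≠ 0) :
    bdPi N a b p1 p2 u0 n * bdBirth N b p2 n =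
      bdPi N a b p1 p2 u0 (n + 1) * bdDeath N a p1 (n + 1) := by
  rw [bdBirth_eq_div hN, bdDeath_eq_div hN, Nat.cast_succ]
  calc _ = bdPi N a b p1 p2 u0 n * (N - n) * ((b * (N - 1) + n * p2) /
        (a * (N - 1) + (N - (n + 1)) * p1)) * (a * (N - 1) + (N - (n + 1)) * p1) / (N - 1) := by
        rw [mul_assoc _ (_ / _), div_mul_cancel₀ _ hD]; ring
    _ = _ := by rw [← bdPi_succ_mul]; ring

theorem twoPoint_generator_eq_bd {N i j : ℕ} (hij : i + j = N) (a b p1 p2 : ℝ) (f : ℕ → ℝ) :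
    (i : ℝ) * (a + p1 * (j : ℝ) / ((N : ℝ) - 1)) * (f (i - 1) - f i) +
        (j : ℝ) * (b + p2 * (i : ℝ) / ((N : ℝ) - 1)) * (f (i + 1) - f i) =
      bdBirth N b p2 i * (f (i + 1) - f i) + bdDeath N a p1 i * (f (i - 1) - f i) := by
  have hj : (j : ℝ) = N - i := by rw [← hij]; push_cast; ring
  rw [hj, bdBirth, bdDeath]
  ring

theorem death_factor_pos {N n : ℕ} (hN : 2 ≤ N) (hn : n + 1 ≤ N) {a p1 : ℝ} (ha : 0 < a)
    (hp1 : 0 ≤ p1) : 0 < a * ((N : ℝ) - 1) + ((N : ℝ) - (n + 1)) * p1 := by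
  have hN' : (0 : ℝ) < N - 1 := by
    rw [sub_pos]; exact_mod_cast hN
  have hn' : (0 : ℝ) ≤ N - (n + 1) := by
    rw [sub_nonneg]; exact_mod_cast hn
  exact add_pos_of_pos_of_nonneg (mul_pos ha hN') (mul_nonneg hn' hp1)

theorem stmt_16_general (N : ℕ) (hN : 2 ≤ N) (a b p1 p2 : ℝ) (ha : 0 < a)
    (hp1 : 0 ≤ p1) (u0 : ℝ) :
    (∀ f : ℕ → ℝ, ∀ η : Fin 2 → ℕ, η 0 + η 1 = N →
      (η 0 : ℝ) * (a + p1 * (η 1 : ℝ) / ((N : ℝ) - 1)) * (f (η 0 - 1) - f (η 0)) +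
          (η 1 : ℝ) * (b + p2 * (η 0 : ℝ) / ((N : ℝ) - 1)) * (f (η 0 + 1) - f (η 0)) =
        bdBirth N b p2 (η 0) * (f (η 0 + 1) - f (η 0)) +
          bdDeath N a p1 (η 0) * (f (η 0 - 1) - f (η 0))) ∧
    (∀ n : ℕ, n ≤ N - 1 →
      bdPi N a b p1 p2 u0 n * bdBirth N b p2 n =
        bdPi N a b p1 p2 u0 (n + 1) * bdDeath N a p1 (n + 1)) := by
  have hN1 : (N : ℝ) - 1 ≠ 0 := by
    rw [sub_ne_zero]; exact_mod_cast (by omega : N ≠ 1)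
  refine ⟨fun f η hη => twoPoint_generator_eq_bd hη a b p1 p2 f, fun n hn => ?_⟩
  exact bdPi_detailed_balance hN1 a b p1 p2 u0
    (death_factor_pos hN (by omega) ha hp1).ne'

/-- The first coordinate of the two-point Fleming-Viot process is a birth-death process
with rates `b_n`, `d_n`, and `π` is its reversible invariant distribution, i.e. `π`
satisfies the detailed balance `π(n)b_n = π(n+1)d_{n+1}`. -/
theorem stmt_16 (N : ℕ) (hN : 2 ≤ N) (a b p1 p2 : ℝ) (ha : 0 < a) (hb : 0 < b)
    (hp1 : 0 ≤ p1) (hp2 : 0 ≤ p2) (u0 : ℝ) (hu0 : 0 < u0) :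
    (∀ f : ℕ → ℝ, ∀ η : Fin 2 → ℕ, η 0 + η 1 = N →
      (η 0 : ℝ) * (a + p1 * (η 1 : ℝ) / ((N : ℝ) - 1)) * (f (η 0 - 1) - f (η 0)) +
          (η 1 : ℝ) * (b + p2 * (η 0 : ℝ) / ((N : ℝ) - 1)) * (f (η 0 + 1) - f (η 0)) =
        bdBirth N b p2 (η 0) * (f (η 0 + 1) - f (η 0)) +
          bdDeath N a p1 (η 0) * (f (η 0 - 1) - f (η 0))) ∧
    (∀ n : ℕ, n ≤ N - 1 →
      bdPi N a b p1 p2 u0 n * bdBirth N b p2 n =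
        bdPi N a b p1 p2 u0 (n + 1) * bdDeath N a p1 (n + 1)) :=
  stmt_16_general N hN a b p1 p2 ha hp1 u0
end

section
/- Ratio factorization for the two-point birth-death chain: for all 1 ≤ i ≤ N−1, π(i+1)/π(i) = 1 + (p₀(1)−p₀(2))(i−i₁)(i−i₂)/((i+1)((a+p₀(1))(N−1)−ip₀(1))), where i₁ and i₂ are the two roots (with i₁ ≤ i₂) of the quadratic (p₀(1)−p₀(2))x² − (N(a+b+p₀(1)−p₀(2)) − (a+b+2p₀(1)))x + (N−1)(bN−a−p₀(1)) = 0 given explicitly by i_{1,2} = (N(a+b+p₀(1)−p₀(2)) − (a+b+2p₀(1)) ∓ √Δ)/(2(p₀(1)−p₀(2))) with Δ = [N(a+b+p₀(1)−p₀(2)) − (a+b+2p₀(1))]² − 4(N−1)(bN−a−p₀(1))(p₀(1)−p₀(2)). -/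
/-- Invariant distribution `π(n) ∝ ∏_{k=1}^n b_{k-1}/d_k`. -/
noncomputable def bdPi' (N : ℕ) (a b p1 p2 : ℝ) (n : ℕ) : ℝ :=
  ∏ k ∈ Finset.Icc 1 n, bdBirth N b p2 (k - 1) / bdDeath N a p1 k

theorem mul_sub_mul_sub_eq_quadratic {c B C s : ℝ} (hc : c ≠ 0)
    (hs : s ^ 2 = B ^ 2 - 4 * c * C) (x : ℝ) :
    c * (x - (B - s) / (2 * c)) * (x - (B + s) / (2 * c)) = c * x ^ 2 - B * x + C := by
  field_simp
  linear_combination (-1) * hs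

section BirthDeath

variable {N : ℕ} {a b p1 p2 : ℝ} {n : ℕ}

theorem bdBirth_pos (hn : n < N) (hb : 0 < b) (hp2 : 0 ≤ p2) : 0 < bdBirth N b p2 n := by
  have hnN : (n : ℝ) + 1 ≤ N := by exact_mod_cast hn
  have hdrift : 0 ≤ p2 * n / ((N : ℝ) - 1) := by
    apply div_nonneg (by positivity); linarith
  unfold bdBirth
  exact mul_pos (by linarith) (by linarith)

theorem bdDeath_pos (hn0 : 0 < n) (hn : n ≤ N) (ha : 0 < a) (hp1 : 0 ≤ p1) :
    0 < bdDeath N a p1 n := by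
  have hnN : (n : ℝ) ≤ N := by exact_mod_cast hn
  have hn1 : (1 : ℝ) ≤ n := by exact_mod_cast hn0
  have hdrift : 0 ≤ p1 * ((N : ℝ) - n) / ((N : ℝ) - 1) := by
    apply div_nonneg (mul_nonneg hp1 (by linarith)); linarith
  unfold bdDeath
  exact mul_pos (by linarith) (by linarith)

theorem bdPi'_pos (hn : n ≤ N) (ha : 0 < a) (hb : 0 < b) (hp1 : 0 ≤ p1) (hp2 : 0 ≤ p2) :
    0 < bdPi' N a b p1 p2 n := by
  refine Finset.prod_pos fun k hk => ?_
  obtain ⟨hk1, hkn⟩ := Finset.mem_Icc.mp hk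
  exact div_pos (bdBirth_pos (by omega) hb hp2) (bdDeath_pos hk1 (hkn.trans hn) ha hp1)

theorem bdPi'_succ (N : ℕ) (a b p1 p2 : ℝ) (n : ℕ) :
    bdPi' N a b p1 p2 (n + 1) =
      bdPi' N a b p1 p2 n * (bdBirth N b p2 n / bdDeath N a p1 (n + 1)) := by
  rw [bdPi', Finset.prod_Icc_succ_top (by omega), Nat.add_sub_cancel]
  rfl

theorem bdPi'_succ_div (h : bdPi' N a b p1 p2 n ≠ 0) :
    bdPi' N a b p1 p2 (n + 1) / bdPi' N a b p1 p2 n =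
      bdBirth N b p2 n / bdDeath N a p1 (n + 1) := by
  rw [bdPi'_succ, mul_div_cancel_left₀ _ h]

theorem bdBirth_div_bdDeath_succ (hN : (N : ℝ) - 1 ≠ 0)
    (hD : (a + p1) * ((N : ℝ) - 1) - n * p1 ≠ 0) :
    bdBirth N b p2 n / bdDeath N a p1 (n + 1) =
      1 + ((p1 - p2) * (n : ℝ) ^ 2 - ((N : ℝ) * (a + b + p1 - p2) - (a + b + 2 * p1)) * n
          + ((N : ℝ) - 1) * (b * N - a - p1)) /
        (((n : ℝ) + 1) * ((a + p1) * ((N : ℝ) - 1) - n * p1)) := by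
  have hdeath : bdDeath N a p1 (n + 1) =
      ((n : ℝ) + 1) * ((a + p1) * ((N : ℝ) - 1) - n * p1) / ((N : ℝ) - 1) := by
    rw [bdDeath, Nat.cast_succ]
    field_simp
    ring
  rw [hdeath, bdBirth, div_div_eq_mul_div, one_add_div (mul_ne_zero (by positivity) hD)]
  congr 1
  field_simp
  ring

end BirthDeath

/-- Ratio factorization for the two-point birth-death chain: for `1 ≤ i ≤ N-1`,
`π(i+1)/π(i) = 1 + (p₁-p₂)(i-i₁)(i-i₂)/((i+1)((a+p₁)(N-1)-ip₁))`, where `i₁ ≤ i₂`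
are the roots of the explicit quadratic. -/
theorem stmt_18 (N : ℕ) (hN : 2 ≤ N) (a b p1 p2 : ℝ) (ha : 0 < a) (hb : 0 < b)
    (hp : p2 < p1) (hp2 : 0 ≤ p2)
    (hΔ : 0 ≤ ((N : ℝ) * (a + b + p1 - p2) - (a + b + 2 * p1)) ^ 2 -
      4 * ((N : ℝ) - 1) * (b * N - a - p1) * (p1 - p2)) :
    ∀ i : ℕ, 1 ≤ i → i ≤ N - 1 →
      let B : ℝ := (N : ℝ) * (a + b + p1 - p2) - (a + b + 2 * p1)
      let Δ : ℝ := B ^ 2 - 4 * ((N : ℝ) - 1) * (b * N - a - p1) * (p1 - p2)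
      let i1 : ℝ := (B - Real.sqrt Δ) / (2 * (p1 - p2))
      let i2 : ℝ := (B + Real.sqrt Δ) / (2 * (p1 - p2))
      bdPi' N a b p1 p2 (i + 1) / bdPi' N a b p1 p2 i =
        1 + (p1 - p2) * ((i : ℝ) - i1) * ((i : ℝ) - i2) /
          (((i : ℝ) + 1) * ((a + p1) * ((N : ℝ) - 1) - i * p1)) := by
  intro i _ hiN
  dsimp only
  have hp1 : 0 < p1 := hp2.trans_lt hp
  have hN1 : (1 : ℝ) < N := by exact_mod_cast hN
  have hiN' : (i : ℝ) + 1 ≤ N := by exact_mod_cast (by omega : i + 1 ≤ N)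
  have hD : 0 < (a + p1) * ((N : ℝ) - 1) - i * p1 := by nlinarith
  rw [bdPi'_succ_div (bdPi'_pos (by omega) ha hb hp1.le hp2).ne',
    bdBirth_div_bdDeath_succ (by linarith) hD.ne',
    mul_sub_mul_sub_eq_quadratic (C := ((N : ℝ) - 1) * (b * N - a - p1)) (sub_ne_zero.mpr hp.ne')
      (by rw [Real.sq_sqrt hΔ]; ring)]
end

section
/- Birth-death Wasserstein contraction via weights: let G generate a birth-death type process on {0,…,N} with birth rates b_k and death rates d_k, and let (u_k)_{0≤k≤N−1} be positive numbers defining the distance δ_u(n,n') = ∑_{k=n}^{n'−1} u_k for n < n'. Set λ_u = min_{0≤k≤N−1}[d_{k+1} − d_k·u_{k−1}/u_k + b_k − b_{k+1}·u_{k+1}/u_k] (with the conventions d_0 = 0, b_N = 0, boundary terms omitted). Then the coordinatewise-monotone coupling generator 𝔾 satisfies 𝔾δ_u(n, n+1) ≤ −λ_u·δ_u(n, n+1) for every n, and hence by linearity 𝔾δ_u(n,n') ≤ −λ_u·δ_u(n,n') for all n < n'. -/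
/-!
From an adjacent pair `(n, n+1)` the four jumps change `δ_u` by `u_{n-1} - u_n`, `u_{n+1} - u_n`,
`-u_n` and `-u_n`, so `𝔾 δ_u(n, n+1) = d_n u_{n-1} + b_{n+1} u_{n+1} - (b_n + d_{n+1}) u_n`, which is
`-u_n` times the `n`-th term of the minimum defining `λ_u`. Additivity of `𝔾` and of `δ_u` over the
adjacent pairs between `n` and `n'` then sums these bounds.
-/

lemma adjacent_drift_le_of_le_rate {lam d d' b b' p q w : ℝ} (hw : 0 < w)
    (hlam : lam ≤ d' - d * p / w + b - b' * q / w) :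
    d * (p - w) + b' * (q - w) + (b - b') * (0 - w) + (d' - d) * (0 - w) ≤ -lam * w := by
  have hscaled := mul_le_mul_of_nonneg_right hlam hw.le
  have hexpand : (d' - d * p / w + b - b' * q / w) * w = d' * w - d * p + b * w - b' * q := by
    field_simp
  linarith

/-- Birth-death Wasserstein contraction via weights: if `𝔾` is the coordinatewise
monotone coupling generator of a birth-death process on `{0,…,N}` (with the stated
jump rates from an adjacent pair `(n,n+1)`, and additive over the decomposition of a
pair `(n,n')` into adjacent pairs), and
`λ_u = min_k [d_{k+1} - d_k u_{k-1}/u_k + b_k - b_{k+1} u_{k+1}/u_k]`, then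
`𝔾 δ_u(n,n') ≤ -λ_u δ_u(n,n')` for all `n < n' ≤ N`. -/
theorem stmt_19 (N : ℕ) (hN : 1 ≤ N) (bR dR u : ℕ → ℝ)
    (hu : ∀ k, k < N → 0 < u k)
    (hd0 : dR 0 = 0)
    (δ : ℕ → ℕ → ℝ) (hδ : ∀ n n', δ n n' = ∑ k ∈ Finset.Ico n n', u k)
    (G : ℕ → ℕ → ℝ)
    (hGadj : ∀ n, n + 1 ≤ N → G n (n + 1) =
      dR n * (δ (n - 1) n - δ n (n + 1)) +
        bR (n + 1) * (δ (n + 1) (n + 2) - δ n (n + 1)) +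
        (bR n - bR (n + 1)) * (δ (n + 1) (n + 1) - δ n (n + 1)) +
        (dR (n + 1) - dR n) * (δ n n - δ n (n + 1)))
    (hGlin : ∀ n n', n ≤ n' → n' ≤ N → G n n' = ∑ k ∈ Finset.Ico n n', G k (k + 1))
    (lam : ℝ)
    (hlam : lam = (Finset.range N).inf' (Finset.nonempty_range_iff.mpr (by omega))
      (fun k => dR (k + 1) - dR k * u (k - 1) / u k + bR k - bR (k + 1) * u (k + 1) / u k)) :
    ∀ n n', n < n' → n' ≤ N → G n n' ≤ -lam * δ n n' := by
  have hadj (k : ℕ) : δ k (k + 1) = u k := by simp [hδ]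
  have hself (k : ℕ) : δ k k = 0 := by simp [hδ]
  -- at `k = 0` the pair `(k - 1, k)` is `(0, 0)` in ℕ; the death term vanishes since `d_0 = 0`
  have hdeath (k : ℕ) : dR k * δ (k - 1) k = dR k * u (k - 1) := by
    cases k with
    | zero => simp [hd0]
    | succ m => simp [hadj]
  have hkey (k : ℕ) (hk : k < N) : G k (k + 1) ≤ -lam * u k := by
    have hrate : lam ≤ dR (k + 1) - dR k * u (k - 1) / u k + bR k - bR (k + 1) * u (k + 1) / u k :=
      hlam ▸ Finset.inf'_le _ (Finset.mem_range.mpr hk)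
    rw [hGadj k hk, hadj, hadj, hself, hself, mul_sub, hdeath, ← mul_sub]
    exact adjacent_drift_le_of_le_rate (hu k hk) hrate
  intro n n' hlt hle
  rw [hGlin n n' hlt.le hle, hδ, Finset.mul_sum]
  exact Finset.sum_le_sum fun k hk => hkey k (by have := (Finset.mem_Ico.mp hk).2; omega)
end
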